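/- arXiv:1712.02238 — 4 statements merged into one kernel-verified Lean document; each statement's English description precedes it below -/
import Mathlib

section
/- Let $f_1, f_2 : \mathbb{R} \to \mathbb{R}$ be smooth nowhere-vanishing functions satisfying the Chiellini condition $\frac{d}{dt}(f_2/f_1) = k f_1$ for some constant $k$. If $x : \mathbb{R} \to \mathbb{R}$ solves the Abel equation $x' = f_1(t) x^2 + f_2(t) x^3$, then $z(t) = f_2(t) x(t) / f_1(t)$ solves $z' = \frac{f_1^2(t)}{f_2(t)} (z^2 + z^3 + k z)$. -/
/-- Chiellini condition maps Abel equation solutions to solutions of the reduced equation. -/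
theorem stmt0 (f1 f2 x z : ℝ → ℝ) (k : ℝ)
    (hf1 : ContDiff ℝ (⊤ : ℕ∞) f1) (hf2 : ContDiff ℝ (⊤ : ℕ∞) f2)
    (hf1ne : ∀ t, f1 t ≠ 0) (hf2ne : ∀ t, f2 t ≠ 0)
    (hchiellini : ∀ t, HasDerivAt (fun s => f2 s / f1 s) (k * f1 t) t)
    (hx : ∀ t, HasDerivAt x (f1 t * x t ^ 2 + f2 t * x t ^ 3) t)
    (hz : ∀ t, z t = f2 t * x t / f1 t) :
    ∀ t, HasDerivAt z (f1 t ^ 2 / f2 t * (z t ^ 2 + z t ^ 3 + k * z t)) t := by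
  intro t
  have hzf : z = fun s => (f2 s / f1 s) * x s := by
    funext s; rw [hz s]; field_simp
  have h : HasDerivAt (fun s => (f2 s / f1 s) * x s) _ t := (hchiellini t).mul (hx t)
  rw [← hzf] at h
  convert h using 1
  rw [hz t]
  field_simp [hf1ne t, hf2ne t]
  ring
end

section
/- Let $f, g : \mathbb{R}^2 \to \mathbb{R}$ be smooth. The system $\partial u/\partial t_1 = \sin(u + g) - \partial f/\partial t_1$, $\partial u/\partial t_2 = \sin(u + f) - \partial g/\partial t_2$ satisfies the zero curvature condition if and only if $A = f - g$ satisfies the sine-Gordon equation $\partial^2 A/\partial t_1 \partial t_2 = \sin(A)$. -/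
/-- Partial derivative with respect to the first variable. -/
noncomputable def pd1 (f : ℝ × ℝ → ℝ) (p : ℝ × ℝ) : ℝ :=
  deriv (fun s => f (s, p.2)) p.1

/-- Partial derivative with respect to the second variable. -/
noncomputable def pd2 (f : ℝ × ℝ → ℝ) (p : ℝ × ℝ) : ℝ :=
  deriv (fun s => f (p.1, s)) p.2

lemma hasD1 (h : ℝ × ℝ → ℝ) (hh : ContDiff ℝ (⊤ : ℕ∞) h) (p : ℝ × ℝ) :
    HasDerivAt (fun s => h (s, p.2)) (fderiv ℝ h p ((1:ℝ), (0:ℝ))) p.1 := by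
  have hc : HasDerivAt (fun s : ℝ => (s, p.2)) ((1:ℝ), (0:ℝ)) p.1 :=
    (hasDerivAt_id p.1).prodMk (hasDerivAt_const p.1 p.2)
  exact ((hh.differentiable (by simp) p).hasFDerivAt).comp_hasDerivAt p.1 hc

lemma hasD2 (h : ℝ × ℝ → ℝ) (hh : ContDiff ℝ (⊤ : ℕ∞) h) (p : ℝ × ℝ) :
    HasDerivAt (fun s => h (p.1, s)) (fderiv ℝ h p ((0:ℝ), (1:ℝ))) p.2 := by
  have hc : HasDerivAt (fun s : ℝ => (p.1, s)) ((0:ℝ), (1:ℝ)) p.2 :=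
    (hasDerivAt_const p.2 p.1).prodMk (hasDerivAt_id p.2)
  exact ((hh.differentiable (by simp) p).hasFDerivAt).comp_hasDerivAt p.2 hc

lemma pd1_eq (h : ℝ × ℝ → ℝ) (hh : ContDiff ℝ (⊤ : ℕ∞) h) (p : ℝ × ℝ) :
    pd1 h p = fderiv ℝ h p ((1:ℝ), (0:ℝ)) := (hasD1 h hh p).deriv

lemma pd2_eq (h : ℝ × ℝ → ℝ) (hh : ContDiff ℝ (⊤ : ℕ∞) h) (p : ℝ × ℝ) :
    pd2 h p = fderiv ℝ h p ((0:ℝ), (1:ℝ)) := (hasD2 h hh p).deriv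

lemma hasDeriv_pd1 (h : ℝ × ℝ → ℝ) (hh : ContDiff ℝ (⊤ : ℕ∞) h) (p : ℝ × ℝ) :
    HasDerivAt (fun s => h (s, p.2)) (pd1 h p) p.1 := by
  rw [pd1_eq h hh p]; exact hasD1 h hh p

lemma hasDeriv_pd2 (h : ℝ × ℝ → ℝ) (hh : ContDiff ℝ (⊤ : ℕ∞) h) (p : ℝ × ℝ) :
    HasDerivAt (fun s => h (p.1, s)) (pd2 h p) p.2 := by
  rw [pd2_eq h hh p]; exact hasD2 h hh p

lemma pd1_smooth (h : ℝ × ℝ → ℝ) (hh : ContDiff ℝ (⊤ : ℕ∞) h) : ContDiff ℝ (⊤ : ℕ∞) (pd1 h) := by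
  have : pd1 h = fun p => fderiv ℝ h p ((1:ℝ), (0:ℝ)) := funext (pd1_eq h hh)
  rw [this]
  exact (ContinuousLinearMap.apply ℝ ℝ ((1:ℝ), (0:ℝ))).contDiff.comp (hh.fderiv_right (by simp))

lemma pd2_smooth (h : ℝ × ℝ → ℝ) (hh : ContDiff ℝ (⊤ : ℕ∞) h) : ContDiff ℝ (⊤ : ℕ∞) (pd2 h) := by
  have : pd2 h = fun p => fderiv ℝ h p ((0:ℝ), (1:ℝ)) := funext (pd2_eq h hh)
  rw [this]
  exact (ContinuousLinearMap.apply ℝ ℝ ((0:ℝ), (1:ℝ))).contDiff.comp (hh.fderiv_right (by simp))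

lemma fderiv_eval (h : ℝ × ℝ → ℝ) (hh : ContDiff ℝ (⊤ : ℕ∞) h) (v w : ℝ × ℝ) (p : ℝ × ℝ) :
    fderiv ℝ (fun q => fderiv ℝ h q v) p w = fderiv ℝ (fderiv ℝ h) p w v := by
  have hd : HasFDerivAt (fderiv ℝ h) (fderiv ℝ (fderiv ℝ h) p) p :=
    (((hh.fderiv_right (m := (⊤ : ℕ∞)) (by simp)).differentiable (by simp)) p).hasFDerivAt
  have := ((ContinuousLinearMap.apply ℝ ℝ v).hasFDerivAt.comp p hd).fderiv
  rw [show (fun q => fderiv ℝ h q v) = (ContinuousLinearMap.apply ℝ ℝ v) ∘ (fderiv ℝ h) from rfl,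
    this]
  rfl

lemma pd_swap (h : ℝ × ℝ → ℝ) (hh : ContDiff ℝ (⊤ : ℕ∞) h) (p : ℝ × ℝ) :
    pd1 (pd2 h) p = pd2 (pd1 h) p := by
  have h2 : pd2 h = fun q => fderiv ℝ h q ((0:ℝ), (1:ℝ)) := funext (pd2_eq h hh)
  have h1 : pd1 h = fun q => fderiv ℝ h q ((1:ℝ), (0:ℝ)) := funext (pd1_eq h hh)
  rw [pd1_eq _ (pd2_smooth h hh) p, pd2_eq _ (pd1_smooth h hh) p, h1, h2,
    fderiv_eval h hh _ _ p, fderiv_eval h hh _ _ p]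
  exact second_derivative_symmetric
    (fun y => ((hh.differentiable (by simp)) y).hasFDerivAt)
    ((((hh.fderiv_right (m := (⊤ : ℕ∞)) (by simp)).differentiable (by simp)) p).hasFDerivAt) _ _

/-- The system `∂u/∂t₁ = sin(u+g) - ∂f/∂t₁`, `∂u/∂t₂ = sin(u+f) - ∂g/∂t₂` satisfies the
zero curvature condition (vanishing of the `∂_u`-component of the bracket of the
autonomised vector fields) if and only if `A = f - g` satisfies the sine-Gordon equation. -/
theorem stmt5 (f g : ℝ × ℝ → ℝ) (hf : ContDiff ℝ (⊤ : ℕ∞) f) (hg : ContDiff ℝ (⊤ : ℕ∞) g) :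
    (∀ (p : ℝ × ℝ) (u : ℝ),
        pd1 (fun q => Real.sin (u + f q) - pd2 g q) p
        - pd2 (fun q => Real.sin (u + g q) - pd1 f q) p
        + (Real.sin (u + g p) - pd1 f p) * Real.cos (u + f p)
        - (Real.sin (u + f p) - pd2 g p) * Real.cos (u + g p) = 0)
    ↔ (∀ p : ℝ × ℝ, pd1 (pd2 (fun q => f q - g q)) p = Real.sin (f p - g p)) := by
  -- key computations
  have T1 : ∀ (p : ℝ × ℝ) (u : ℝ),
      pd1 (fun q => Real.sin (u + f q) - pd2 g q) p
        = Real.cos (u + f p) * pd1 f p - pd1 (pd2 g) p := by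
    intro p u
    have hs : HasDerivAt (fun s => Real.sin (u + f (s, p.2)))
        (Real.cos (u + f p) * (0 + pd1 f p)) p.1 :=
      (Real.hasDerivAt_sin (u + f p)).comp p.1 (h := fun s => u + f (s, p.2))
        ((hasDerivAt_const p.1 u).add (hasDeriv_pd1 f hf p))
    have := (hs.sub (hasDeriv_pd1 (pd2 g) (pd2_smooth g hg) p)).deriv
    rw [pd1]
    erw [this]
    ring
  have T2 : ∀ (p : ℝ × ℝ) (u : ℝ),
      pd2 (fun q => Real.sin (u + g q) - pd1 f q) p
        = Real.cos (u + g p) * pd2 g p - pd2 (pd1 f) p := by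
    intro p u
    have hs : HasDerivAt (fun s => Real.sin (u + g (p.1, s)))
        (Real.cos (u + g p) * (0 + pd2 g p)) p.2 :=
      (Real.hasDerivAt_sin (u + g p)).comp p.2 (h := fun s => u + g (p.1, s))
        ((hasDerivAt_const p.2 u).add (hasDeriv_pd2 g hg p))
    have := (hs.sub (hasDeriv_pd2 (pd1 f) (pd1_smooth f hf) p)).deriv
    rw [pd2]
    erw [this]
    ring
  have T3 : ∀ p : ℝ × ℝ,
      pd1 (pd2 (fun q => f q - g q)) p = pd2 (pd1 f) p - pd1 (pd2 g) p := by
    intro p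
    have hsub : pd2 (fun q => f q - g q) = fun q => pd2 f q - pd2 g q := by
      funext q
      exact ((hasDeriv_pd2 f hf q).sub (hasDeriv_pd2 g hg q)).deriv
    rw [hsub]
    have : pd1 (fun q => pd2 f q - pd2 g q) p = pd1 (pd2 f) p - pd1 (pd2 g) p :=
      ((hasDeriv_pd1 (pd2 f) (pd2_smooth f hf) p).sub
        (hasDeriv_pd1 (pd2 g) (pd2_smooth g hg) p)).deriv
    rw [this, pd_swap f hf p]
  have trig : ∀ (p : ℝ × ℝ) (u : ℝ),
      Real.sin (u + g p) * Real.cos (u + f p) - Real.sin (u + f p) * Real.cos (u + g p)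
        = -Real.sin (f p - g p) := by
    intro p u
    have := Real.sin_sub (u + g p) (u + f p)
    rw [show u + g p - (u + f p) = -(f p - g p) by ring, Real.sin_neg] at this
    linarith [this]
  constructor
  · intro H p
    have h0 := H p 0
    rw [T1 p 0, T2 p 0] at h0
    rw [T3 p]
    nlinarith [h0, trig p 0]
  · intro H p u
    have := H p
    rw [T3 p] at this
    rw [T1 p u, T2 p u]
    nlinarith [this, trig p u]
end

section
/- Let $N$ be a smooth manifold, $h : \mathbb{R}^s \to \mathrm{Diff}(N)$ a generalised $t$-flow (smooth family of diffeomorphisms with $h_{t_0} = \mathrm{id}$), and $\mathbf{X} = (X_1, \dots, X_s)$ an integrable $t$-dependent polyvector field on $N$. Define $(h_{\bigstar}\mathbf{X})_{\pi,t} = \frac{\partial h_t}{\partial t_{\pi}} \circ h_t^{-1} + (h_t)_* (X_{\pi})_t$. Then a curve $t \mapsto \gamma(t)$ is an integral section of $\mathbf{X}$ (i.e. $\partial \gamma/\partial t_{\pi} = X_{\pi}(t, \gamma(t))$ for all $\pi$) if and only if $t \mapsto h_t(\gamma(t))$ is an integral section of $h_{\bigstar}\mathbf{X}$. -/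
/-- Partial derivative in the `π`-th time direction as the full derivative on `(π-basis, 0)`. -/
lemma partial_t_eq {s : ℕ} {E : Type*} [NormedAddCommGroup E] [NormedSpace ℝ E]
    {h : (Fin s → ℝ) → E → E} {D : ((Fin s → ℝ) × E) →L[ℝ] E} {t : Fin s → ℝ} {x : E}
    (hd : HasFDerivAt (fun p : (Fin s → ℝ) × E => h p.1 p.2) D (t, x)) (π : Fin s) :
    deriv (fun r => h (Function.update t π r) x) (t π) = D (Pi.single π 1, 0) := by
  have h1 : HasDerivAt (fun r : ℝ => ((Function.update t π r : Fin s → ℝ), x))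
      ((Pi.single π 1 : Fin s → ℝ), (0 : E)) (t π) :=
    (hasDerivAt_update t π (t π)).prodMk (hasDerivAt_const _ x)
  have hd' : HasFDerivAt (fun p : (Fin s → ℝ) × E => h p.1 p.2) D
      (Function.update t π (t π), x) := by rwa [Function.update_eq_self]
  exact (hd'.comp_hasDerivAt (t π) h1).deriv

/-- Partial derivative in the space direction as the full derivative on `(0, v)`. -/
lemma partial_x_eq {s : ℕ} {E : Type*} [NormedAddCommGroup E] [NormedSpace ℝ E]
    {h : (Fin s → ℝ) → E → E} {D : ((Fin s → ℝ) × E) →L[ℝ] E} {t : Fin s → ℝ} {x : E}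
    (hd : HasFDerivAt (fun p : (Fin s → ℝ) × E => h p.1 p.2) D (t, x)) (v : E) :
    fderiv ℝ (h t) x v = D (0, v) := by
  have h1 : HasFDerivAt (h t) (D.comp (ContinuousLinearMap.inr ℝ (Fin s → ℝ) E)) x :=
    hd.comp x (hasFDerivAt_prodMk_right t x)
  rw [h1.fderiv]; rfl

/-- Differentiating `hinv t (h t x) = x`. -/
lemma cancel_eq {s : ℕ} {E : Type*} [NormedAddCommGroup E] [NormedSpace ℝ E]
    {h hinv : (Fin s → ℝ) → E → E} {DH DI : ((Fin s → ℝ) × E) →L[ℝ] E} {t : Fin s → ℝ} {x : E}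
    (hleft : ∀ u, Function.LeftInverse (hinv u) (h u))
    (hd : HasFDerivAt (fun p : (Fin s → ℝ) × E => h p.1 p.2) DH (t, x))
    (hdi : HasFDerivAt (fun p : (Fin s → ℝ) × E => hinv p.1 p.2) DI (t, h t x))
    (u : Fin s → ℝ) (v : E) : DI (u, DH (u, v)) = v := by
  have h1 : HasFDerivAt (fun p : (Fin s → ℝ) × E => ((p.1 : Fin s → ℝ), h p.1 p.2))
      ((ContinuousLinearMap.fst ℝ (Fin s → ℝ) E).prod DH) (t, x) := (hasFDerivAt_fst).prodMk hd
  have h2 : HasFDerivAt (fun p : (Fin s → ℝ) × E => hinv p.1 (h p.1 p.2))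
      (DI.comp ((ContinuousLinearMap.fst ℝ (Fin s → ℝ) E).prod DH)) (t, x) := by have := hdi.comp (t, x) h1; exact this
  have h3 : HasFDerivAt (fun p : (Fin s → ℝ) × E => hinv p.1 (h p.1 p.2))
      (ContinuousLinearMap.snd ℝ (Fin s → ℝ) E) (t, x) := by
    have heq : (fun p : (Fin s → ℝ) × E => hinv p.1 (h p.1 p.2)) = fun p => p.2 :=
      funext fun p => hleft p.1 p.2
    rw [heq]; exact hasFDerivAt_snd
  have key := h2.unique h3
  calc DI (u, DH (u, v)) = (DI.comp ((ContinuousLinearMap.fst ℝ (Fin s → ℝ) E).prod DH)) (u, v) := rfl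
    _ = (ContinuousLinearMap.snd ℝ (Fin s → ℝ) E) (u, v) := by rw [key]
    _ = v := rfl

/-- The action of a generalised `t`-flow `h` (with inverse family `hinv`) on a
`t`-dependent polyvector field `X`: `(h★X)_π,t = ∂h_t/∂t_π ∘ h_t⁻¹ + (h_t)_* (X_π)_t`. -/
noncomputable def tflowPush (s : ℕ) {E : Type*} [NormedAddCommGroup E] [NormedSpace ℝ E]
    (h hinv : (Fin s → ℝ) → E → E) (X : Fin s → (Fin s → ℝ) → E → E) :
    Fin s → (Fin s → ℝ) → E → E :=
  fun π t x =>
    deriv (fun r => h (Function.update t π r) (hinv t x)) (t π)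
      + fderiv ℝ (h t) (hinv t x) (X π t (hinv t x))

/-- `γ` is an integral section of the `t`-dependent polyvector field `X`:
`∂γ/∂t_π (t) = X_π(t, γ(t))` for every `π`. -/
def IsIntegralSection (s : ℕ) {E : Type*} [NormedAddCommGroup E] [NormedSpace ℝ E]
    (X : Fin s → (Fin s → ℝ) → E → E) (γ : (Fin s → ℝ) → E) : Prop :=
  ∀ t, ∃ D : (Fin s → ℝ) →L[ℝ] E, HasFDerivAt γ D t ∧
    ∀ π, D (Pi.single π 1) = X π t (γ t)

/-- The zero curvature (integrability) condition for `X`. -/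
def ZeroCurvature (s : ℕ) {E : Type*} [NormedAddCommGroup E] [NormedSpace ℝ E]
    (X : Fin s → (Fin s → ℝ) → E → E) : Prop :=
  ∀ (π ν : Fin s) (t : Fin s → ℝ) (x : E),
    deriv (fun r => X ν (Function.update t π r) x) (t π)
      - deriv (fun r => X π (Function.update t ν r) x) (t ν)
      + fderiv ℝ (X ν t) x (X π t x) - fderiv ℝ (X π t) x (X ν t x) = 0

/-- `γ` is an integral section of `X` iff `t ↦ h_t(γ(t))` is an integral section of
`h★X`. -/
theorem stmt8 (s : ℕ) {E : Type*} [NormedAddCommGroup E] [NormedSpace ℝ E]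
    (t0 : Fin s → ℝ) (h hinv : (Fin s → ℝ) → E → E)
    (hsm : ContDiff ℝ (⊤ : ℕ∞) (fun p : (Fin s → ℝ) × E => h p.1 p.2))
    (hsm' : ContDiff ℝ (⊤ : ℕ∞) (fun p : (Fin s → ℝ) × E => hinv p.1 p.2))
    (hleft : ∀ t, Function.LeftInverse (hinv t) (h t))
    (hright : ∀ t, Function.RightInverse (hinv t) (h t))
    (hfoot : h t0 = id)
    (X : Fin s → (Fin s → ℝ) → E → E)
    (hXsm : ∀ π, ContDiff ℝ (⊤ : ℕ∞) (fun p : (Fin s → ℝ) × E => X π p.1 p.2))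
    (hXint : ZeroCurvature s X)
    (γ : (Fin s → ℝ) → E) :
    IsIntegralSection s X γ ↔
      IsIntegralSection s (tflowPush s h hinv X) (fun t => h t (γ t)) := by
  constructor
  · intro hγ t
    obtain ⟨D, hD, hDe⟩ := hγ t
    have hdH : HasFDerivAt (fun p : (Fin s → ℝ) × E => h p.1 p.2)
        (fderiv ℝ (fun p : (Fin s → ℝ) × E => h p.1 p.2) (t, γ t)) (t, γ t) :=
      ((hsm.differentiable (by simp)) _).hasFDerivAt
    set DH := fderiv ℝ (fun p : (Fin s → ℝ) × E => h p.1 p.2) (t, γ t) with hDHdef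
    refine ⟨DH.comp ((ContinuousLinearMap.id ℝ (Fin s → ℝ)).prod D),
      by have := hdH.comp t ((hasFDerivAt_id t).prodMk hD); exact this, ?_⟩
    intro π
    show DH (Pi.single π 1, D (Pi.single π 1)) = tflowPush s h hinv X π t (h t (γ t))
    rw [hDe π]
    simp only [tflowPush, hleft t (γ t)]
    rw [partial_t_eq hdH π, partial_x_eq hdH (X π t (γ t))]
    have hsplit : ((Pi.single π 1 : Fin s → ℝ), X π t (γ t))
        = ((Pi.single π 1 : Fin s → ℝ), (0 : E)) + ((0 : Fin s → ℝ), X π t (γ t)) := by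
      simp
    rw [hsplit, map_add]
  · intro hδ t
    obtain ⟨D, hD, hDe⟩ := hδ t
    have hdH : HasFDerivAt (fun p : (Fin s → ℝ) × E => h p.1 p.2)
        (fderiv ℝ (fun p : (Fin s → ℝ) × E => h p.1 p.2) (t, γ t)) (t, γ t) :=
      ((hsm.differentiable (by simp)) _).hasFDerivAt
    set DH := fderiv ℝ (fun p : (Fin s → ℝ) × E => h p.1 p.2) (t, γ t) with hDHdef
    have hdI : HasFDerivAt (fun p : (Fin s → ℝ) × E => hinv p.1 p.2)
        (fderiv ℝ (fun p : (Fin s → ℝ) × E => hinv p.1 p.2) (t, h t (γ t))) (t, h t (γ t)) :=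
      ((hsm'.differentiable (by simp)) _).hasFDerivAt
    set DI := fderiv ℝ (fun p : (Fin s → ℝ) × E => hinv p.1 p.2) (t, h t (γ t)) with hDIdef
    have hDγ : HasFDerivAt γ (DI.comp ((ContinuousLinearMap.id ℝ (Fin s → ℝ)).prod D)) t := by
      have hγeq : γ = fun u => hinv u (h u (γ u)) := funext fun u => (hleft u (γ u)).symm
      conv in (occs := 1) γ => rw [hγeq]
      have := hdI.comp t ((hasFDerivAt_id t).prodMk hD); exact this
    refine ⟨DI.comp ((ContinuousLinearMap.id ℝ (Fin s → ℝ)).prod D), hDγ, ?_⟩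
    intro π
    show DI (Pi.single π 1, D (Pi.single π 1)) = X π t (γ t)
    have hDval : D (Pi.single π 1)
        = DH (Pi.single π 1, 0) + DH (0, X π t (γ t)) := by
      have := hDe π
      simp only [tflowPush, hleft t (γ t)] at this
      rw [this, partial_t_eq hdH π, partial_x_eq hdH (X π t (γ t))]
    rw [hDval]
    have hsplit : ((Pi.single π 1 : Fin s → ℝ),
          DH (Pi.single π 1, 0) + DH (0, X π t (γ t)))
        = ((Pi.single π 1 : Fin s → ℝ), DH ((Pi.single π 1 : Fin s → ℝ), (0 : E)))
          + ((0 : Fin s → ℝ), DH ((0 : Fin s → ℝ), X π t (γ t))) := by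
      simp
    rw [hsplit, map_add, cancel_eq hleft hdH hdI, cancel_eq hleft hdH hdI]
    simp
end

section
/- Let $X_1, \dots, X_r$ be $t$-dependent vector fields on $N$ ($t \in \mathbb{R}^s$). Their $t_\pi$-autonomisations satisfy $[\bar X^{[\pi]}_o, \bar X^{[\pi']}_p] = \sum_{\pi''=1}^{s}\sum_{u=1}^{r} f^{\pi\pi' u}_{op\pi''}(t)\, \bar X^{[\pi'']}_u$ for some functions $f^{\pi\pi' u}_{op\pi''} : \mathbb{R}^s \to \mathbb{R}$ if and only if their $t_\pi$-prolongations to $\mathbb{R}^s \times N^{m+1}$ satisfy the analogous relations with the same coefficient functions; moreover, in that case, matching the $\partial_{t_{\pi''}}$-components on both sides forces $\sum_{u=1}^r f^{\pi\pi' u}_{op\pi''}(t) = 0$ for all indices. -/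
/-- Lie bracket of vector fields on a normed space. -/
noncomputable def vbr {F : Type*} [NormedAddCommGroup F] [NormedSpace ℝ F]
    (U V : F → F) : F → F :=
  fun p => fderiv ℝ V p (U p) - fderiv ℝ U p (V p)

/-- The `t_π`-autonomisation `X̄^[π] = ∂_{t_π} + X(t,x)` of a `t`-dependent vector field,
as a vector field on `ℝˢ × E`. -/
def tAut (s : ℕ) {E : Type*} [NormedAddCommGroup E] [NormedSpace ℝ E]
    (X : (Fin s → ℝ) → E → E) (π : Fin s) :
    ((Fin s → ℝ) × E) → ((Fin s → ℝ) × E) :=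
  fun q => ((Pi.single π 1 : Fin s → ℝ), X q.1 q.2)

/-- The `t_π`-prolongation of a `t`-dependent vector field to `ℝˢ × E^{m+1}`. -/
def tProlong (s m : ℕ) {E : Type*} [NormedAddCommGroup E] [NormedSpace ℝ E]
    (X : (Fin s → ℝ) → E → E) (π : Fin s) :
    ((Fin s → ℝ) × (Fin (m + 1) → E)) → ((Fin s → ℝ) × (Fin (m + 1) → E)) :=
  fun p => ((Pi.single π 1 : Fin s → ℝ), fun a => X p.1 (p.2 a))

section aux

variable {s m : ℕ} {E : Type*} [NormedAddCommGroup E] [NormedSpace ℝ E]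

lemma hasFDerivAt_tAut (X : (Fin s → ℝ) → E → E)
    (hXd : Differentiable ℝ (fun q : (Fin s → ℝ) × E => X q.1 q.2))
    (π : Fin s) (q : (Fin s → ℝ) × E) :
    HasFDerivAt (tAut s X π)
      ((0 : ((Fin s → ℝ) × E) →L[ℝ] (Fin s → ℝ)).prod
        (fderiv ℝ (fun q : (Fin s → ℝ) × E => X q.1 q.2) q)) q :=
  HasFDerivAt.prodMk (hasFDerivAt_const _ _) (hXd q).hasFDerivAt

lemma vbr_tAut (X Y : (Fin s → ℝ) → E → E)
    (hXd : Differentiable ℝ (fun q : (Fin s → ℝ) × E => X q.1 q.2))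
    (hYd : Differentiable ℝ (fun q : (Fin s → ℝ) × E => Y q.1 q.2))
    (π π' : Fin s) (q : (Fin s → ℝ) × E) :
    vbr (tAut s X π) (tAut s Y π') q
      = (0, fderiv ℝ (fun q : (Fin s → ℝ) × E => Y q.1 q.2) q (Pi.single π 1, X q.1 q.2)
           - fderiv ℝ (fun q : (Fin s → ℝ) × E => X q.1 q.2) q (Pi.single π' 1, Y q.1 q.2)) := by
  unfold vbr
  rw [(hasFDerivAt_tAut X hXd π q).fderiv, (hasFDerivAt_tAut Y hYd π' q).fderiv]
  simp [tAut, Prod.ext_iff]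

/-- The continuous linear projection `(t, x) ↦ (t, x a)`. -/
noncomputable def projL (s m : ℕ) (E : Type*) [NormedAddCommGroup E] [NormedSpace ℝ E]
    (a : Fin (m + 1)) :
    ((Fin s → ℝ) × (Fin (m + 1) → E)) →L[ℝ] ((Fin s → ℝ) × E) :=
  (ContinuousLinearMap.fst ℝ _ _).prod
    ((ContinuousLinearMap.proj a).comp (ContinuousLinearMap.snd ℝ _ _))

lemma hasFDerivAt_tProlong (X : (Fin s → ℝ) → E → E)
    (hXd : Differentiable ℝ (fun q : (Fin s → ℝ) × E => X q.1 q.2))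
    (π : Fin s) (q : ((Fin s → ℝ) × (Fin (m + 1) → E))) :
    HasFDerivAt (tProlong s m X π)
      ((0 : ((Fin s → ℝ) × (Fin (m + 1) → E)) →L[ℝ] (Fin s → ℝ)).prod
        (ContinuousLinearMap.pi fun a =>
          (fderiv ℝ (fun q : (Fin s → ℝ) × E => X q.1 q.2) (q.1, q.2 a)).comp
            (projL s m E a))) q := by
  refine HasFDerivAt.prodMk (hasFDerivAt_const _ _) (hasFDerivAt_pi.2 fun a => ?_)
  exact ((hXd (q.1, q.2 a)).hasFDerivAt).comp q (projL s m E a).hasFDerivAt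

lemma vbr_tProlong (X Y : (Fin s → ℝ) → E → E)
    (hXd : Differentiable ℝ (fun q : (Fin s → ℝ) × E => X q.1 q.2))
    (hYd : Differentiable ℝ (fun q : (Fin s → ℝ) × E => Y q.1 q.2))
    (π π' : Fin s) (q : ((Fin s → ℝ) × (Fin (m + 1) → E))) :
    vbr (tProlong s m X π) (tProlong s m Y π') q
      = (0, fun a =>
          fderiv ℝ (fun q : (Fin s → ℝ) × E => Y q.1 q.2) (q.1, q.2 a)
              (Pi.single π 1, X q.1 (q.2 a))
            - fderiv ℝ (fun q : (Fin s → ℝ) × E => X q.1 q.2) (q.1, q.2 a)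
              (Pi.single π' 1, Y q.1 (q.2 a))) := by
  unfold vbr
  rw [(hasFDerivAt_tProlong X hXd π q).fderiv, (hasFDerivAt_tProlong Y hYd π' q).fderiv]
  simp [tProlong, Prod.ext_iff, projL]
  rfl

end aux

/-- The `t_π`-autonomisations of `X₁,…,X_r` satisfy the bracket relations with
coefficients `f` iff their `t_π`-prolongations to `ℝˢ × E^{m+1}` satisfy the analogous
relations with the same coefficients; moreover in that case `∑_u f^{ππ'u}_{opπ''}(t) = 0`
for all indices. -/
theorem stmt13 (s m r : ℕ) {E : Type*} [NormedAddCommGroup E] [NormedSpace ℝ E]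
    (X : Fin r → (Fin s → ℝ) → E → E)
    (hX : ∀ j, ContDiff ℝ (⊤ : ℕ∞) (fun q : (Fin s → ℝ) × E => X j q.1 q.2))
    (f : Fin s → Fin s → Fin r → Fin r → Fin r → Fin s → (Fin s → ℝ) → ℝ) :
    ((∀ (o p : Fin r) (π π' : Fin s) (q : (Fin s → ℝ) × E),
        vbr (tAut s (X o) π) (tAut s (X p) π') q
          = ∑ π'' : Fin s, ∑ u : Fin r, f π π' u o p π'' q.1 • tAut s (X u) π'' q)
      ↔ (∀ (o p : Fin r) (π π' : Fin s) (q : (Fin s → ℝ) × (Fin (m + 1) → E)),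
        vbr (tProlong s m (X o) π) (tProlong s m (X p) π') q
          = ∑ π'' : Fin s, ∑ u : Fin r, f π π' u o p π'' q.1 • tProlong s m (X u) π'' q)) ∧
    ((∀ (o p : Fin r) (π π' : Fin s) (q : (Fin s → ℝ) × E),
        vbr (tAut s (X o) π) (tAut s (X p) π') q
          = ∑ π'' : Fin s, ∑ u : Fin r, f π π' u o p π'' q.1 • tAut s (X u) π'' q) →
      ∀ (o p : Fin r) (π π' π'' : Fin s) (t : Fin s → ℝ),
        ∑ u : Fin r, f π π' u o p π'' t = 0) := by
  have hd : ∀ j, Differentiable ℝ (fun q : (Fin s → ℝ) × E => X j q.1 q.2) :=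
    fun j => (hX j).differentiable (by simp)
  -- From the base relation, the `∂_t`-components force the coefficient sums to vanish.
  have key : (∀ (o p : Fin r) (π π' : Fin s) (q : (Fin s → ℝ) × E),
        vbr (tAut s (X o) π) (tAut s (X p) π') q
          = ∑ π'' : Fin s, ∑ u : Fin r, f π π' u o p π'' q.1 • tAut s (X u) π'' q) →
      ∀ (o p : Fin r) (π π' π'' : Fin s) (t : Fin s → ℝ),
        ∑ u : Fin r, f π π' u o p π'' t = 0 := by
    intro h o p π π' π'' t
    have h1 := congrArg Prod.fst (h o p π π' (t, 0))
    rw [vbr_tAut (X o) (X p) (hd o) (hd p)] at h1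
    have h2 := congrFun h1 π''
    simpa [tAut, Prod.fst_sum, Finset.sum_apply, Pi.single_apply, eq_comm] using h2
  refine ⟨⟨?_, ?_⟩, key⟩
  · -- base ⟹ prolongation
    intro h o p π π' q
    rw [vbr_tProlong (X o) (X p) (hd o) (hd p)]
    have hzero : ∀ π'' : Fin s, ∑ u : Fin r, f π π' u o p π'' q.1 = 0 :=
      fun π'' => key h o p π π' π'' q.1
    refine Prod.ext ?_ ?_
    · simp [tProlong, Prod.fst_sum, funext_iff, Finset.sum_apply, Pi.single_apply]
      intro i
      exact (hzero i).symm
    · funext a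
      have h2 := congrArg Prod.snd (h o p π π' (q.1, q.2 a))
      rw [vbr_tAut (X o) (X p) (hd o) (hd p)] at h2
      simpa [tAut, tProlong, Prod.snd_sum, Finset.sum_apply] using h2
  · -- prolongation ⟹ base
    intro h o p π π' q
    have h1 := h o p π π' (q.1, fun _ => q.2)
    rw [vbr_tProlong (X o) (X p) (hd o) (hd p)] at h1
    rw [vbr_tAut (X o) (X p) (hd o) (hd p)]
    refine Prod.ext ?_ ?_
    · have := congrArg Prod.fst h1
      simpa [tAut, tProlong, Prod.fst_sum] using this
    · have := congrFun (congrArg Prod.snd h1) 0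
      simpa [tAut, tProlong, Prod.snd_sum, Finset.sum_apply] using this
end
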